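/- Let (Ω, P, π) be a finite lazy irreducible reversible Markov chain, Z ⊂ Ω nonempty, x ∈ Ω, and suppose Z is balanced seen from x, i.e. for every t with P_x[T_Z = t] > 0 and every z ∈ Z, P_x[X_t = z | T_Z = t] = π(z)/π(Z). Then for p, ε ∈ (0,1), with t_{x,Z}(p) := min{t : P_x[T_Z > t] ≤ p} and r_ε := ⌈t_rel·log(π(Zᶜ)/(π(Z)ε²))/2⌉, one has ‖P_x^{t_{x,Z}(p)+r_ε} - π‖_TV ≤ p + ε. -/

import Mathlib

open Finset

/-- `survSet P Z t x = P_x[T_Z > t]`: the probability, starting from `x`, of not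
having visited the set `Z` by time `t`. -/
noncomputable def survSet {Ω : Type*} [Fintype Ω] [DecidableEq Ω]
    (P : Matrix Ω Ω ℝ) (Z : Finset Ω) : ℕ → Ω → ℝ
  | 0, x => if x ∈ Z then 0 else 1
  | (t + 1), x => if x ∈ Z then 0 else ∑ y, P x y * survSet P Z t y

/-- `fstHit P Z t x z = P_x[T_Z = t, X_{T_Z} = z]`: the probability, starting from
`x`, that the first visit to `Z` occurs at time `t` and lands at `z`. -/
noncomputable def fstHit {Ω : Type*} [Fintype Ω] [DecidableEq Ω]
    (P : Matrix Ω Ω ℝ) (Z : Finset Ω) : ℕ → Ω → Ω → ℝ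
  | 0, x, z => if x ∈ Z ∧ x = z then 1 else 0
  | (t + 1), x, z => if x ∈ Z then 0 else ∑ y, P x y * fstHit P Z t y z

/-! Split the walk at its first visit to `Z` before time `T = t_{x,Z}(p)`:
P_x^(T+r) = ∑_{i+j=T} P_x[T_Z = i] · π_Z P^(j+r) + (walks avoiding Z up to time T),
the balance hypothesis being exactly what makes the hitting position at time i distributed as
π_Z. The last term has mass P_x[T_Z > T] ≤ p. For the others, conjugating the reversible kernel
by √π gives a symmetric matrix whose spectrum on √π^⊥ lies in [0, λ₂] (laziness), so
‖π_Z P^m - π‖_TV ≤ λ₂^m √(π(Zᶜ)/π(Z)) / 2 ≤ ε for m ≥ r. Irreducibility gives λ₂ < 1 and makes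
T finite. -/

open Matrix

/-- First-entrance decomposition: when `e`, `f` are the indicators of a set `Z` and of its
complement, `(f * p) ^ i * e` is the law of first entering `Z` at time `i`. -/
theorem pow_eq_sum_antidiagonal_add {R : Type*} [Semiring R] (p e f : R) (hef : e + f = 1)
    (n : ℕ) :
    p ^ n = ∑ ij ∈ antidiagonal n, (f * p) ^ ij.1 * e * p ^ ij.2 + (f * p) ^ n * f := by
  induction n with
  | zero => simp [hef]
  | succ n ih =>
    rw [pow_succ, ih, add_mul, sum_mul, Nat.sum_antidiagonal_succ',
      show (f * p) ^ n * f * p = (f * p) ^ (n + 1) * (e + f) by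
        rw [hef, mul_one, pow_succ, mul_assoc]]
    simp only [pow_succ, pow_zero, mul_one, mul_add, mul_assoc]
    abel

theorem Matrix.mul_apply_nonneg {m n o R : Type*} [Fintype n] [Semiring R] [PartialOrder R]
    [IsOrderedRing R] {A : Matrix m n R} {B : Matrix n o R} (hA : ∀ i j, 0 ≤ A i j)
    (hB : ∀ i j, 0 ≤ B i j) (i : m) (j : o) : 0 ≤ (A * B) i j :=
  sum_nonneg fun k _ => mul_nonneg (hA i k) (hB k j)

theorem Matrix.pow_mulVec_eq_self {n R : Type*} [Fintype n] [DecidableEq n] [Semiring R]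
    {A : Matrix n n R} {v : n → R} (h : A *ᵥ v = v) (m : ℕ) : A ^ m *ᵥ v = v := by
  induction m with
  | zero => simp
  | succ m ih => rw [pow_succ, ← mulVec_mulVec, h, ih]

theorem LinearMap.IsSymmetric.norm_apply_sq_le {E : Type*} [NormedAddCommGroup E]
    [InnerProductSpace ℝ E] [FiniteDimensional ℝ E] {T : E →ₗ[ℝ] E} (hT : T.IsSymmetric)
    {c : ℝ} (hc : ∀ μ, Module.End.HasEigenvalue T μ → |μ| ≤ c) (v : E) :
    ‖T v‖ ^ 2 ≤ c ^ 2 * ‖v‖ ^ 2 := by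
  set b := hT.eigenvectorBasis rfl
  rw [← b.repr.norm_map, ← b.repr.norm_map v, EuclideanSpace.norm_sq_eq,
    EuclideanSpace.norm_sq_eq, mul_sum]
  refine sum_le_sum fun i _ => ?_
  rw [hT.eigenvectorBasis_apply_self_apply, norm_mul, mul_pow]
  obtain ⟨h₁, h₂⟩ := abs_le.1 (hc _ (hT.hasEigenvalue_eigenvalues rfl i))
  exact mul_le_mul_of_nonneg_right (by simpa using sq_le_sq' h₁ h₂) (sq_nonneg _)

lemma pow_mul_sqrt_le_of_ceil_le {l a ε : ℝ} (hl0 : 0 ≤ l) (hl1 : l < 1) (ha : 0 ≤ a)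
    (hε : 0 < ε) {m : ℕ} (hm : ⌈(1 - l)⁻¹ * Real.log (a / ε ^ 2) / 2⌉₊ ≤ m) :
    l ^ m * √a ≤ ε := by
  rcases ha.eq_or_lt with rfl | ha
  · simpa using hε.le
  have hm' : Real.log (a / ε ^ 2) ≤ 2 * m * (1 - l) := by
    have := (Nat.le_ceil _).trans (Nat.cast_le.2 hm)
    rw [div_le_iff₀ two_pos, inv_mul_le_iff₀ (sub_pos.2 hl1)] at this
    linarith
  have hpow : (l ^ m) ^ 2 ≤ ε ^ 2 / a := by
    calc (l ^ m) ^ 2 = l ^ (2 * m) := by rw [← pow_mul, mul_comm]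
      _ ≤ Real.exp (l - 1) ^ (2 * m) := by
          gcongr; linarith [Real.add_one_le_exp (l - 1)]
      _ = Real.exp (-(2 * m * (1 - l))) := by rw [← Real.exp_nat_mul]; push_cast; ring_nf
      _ ≤ Real.exp (-Real.log (a / ε ^ 2)) := by gcongr
      _ = ε ^ 2 / a := by rw [Real.exp_neg, Real.exp_log (by positivity), inv_div]
  refine (pow_le_pow_iff_left₀ (by positivity) hε.le two_ne_zero).1 ?_
  rw [mul_pow, Real.sq_sqrt ha.le]
  calc (l ^ m) ^ 2 * a ≤ ε ^ 2 / a * a := by gcongr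
    _ = ε ^ 2 := div_mul_cancel₀ _ ha.ne'

section TotalVariation

variable {Ω : Type*} [Fintype Ω] {π : Ω → ℝ}

noncomputable def tvDist (μ ν : Ω → ℝ) : ℝ := 1 / 2 * ∑ u, |μ u - ν u|

lemma tvDist_le_sum_mul_tvDist_add {ι : Type*} {s : Finset ι} {w : ι → ℝ} {ν : ι → Ω → ℝ}
    {μ R : Ω → ℝ} (hμ : ∀ u, μ u = ∑ k ∈ s, w k * ν k u + R u)
    (hmass : ∑ k ∈ s, w k + ∑ u, R u = 1) (hπ : ∀ u, 0 ≤ π u) (hπ1 : ∑ u, π u = 1)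
    (hw : ∀ k ∈ s, 0 ≤ w k) (hR : ∀ u, 0 ≤ R u) :
    tvDist μ π ≤ ∑ k ∈ s, w k * tvDist (ν k) π + ∑ u, R u := by
  have hdiff : ∀ u, |μ u - π u| ≤
      ∑ k ∈ s, w k * |ν k u - π u| + (R u + (∑ v, R v) * π u) := by
    intro u
    have : μ u - π u = ∑ k ∈ s, w k * (ν k u - π u) + (R u - (∑ v, R v) * π u) := by
      simp only [hμ, mul_sub, sum_sub_distrib, ← sum_mul]
      linear_combination (π u) * hmass
    rw [this]
    refine (abs_add_le _ _).trans (add_le_add ?_ ?_)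
    · refine (abs_sum_le_sum_abs _ _).trans (le_of_eq (sum_congr rfl fun k hk => ?_))
      rw [abs_mul, abs_of_nonneg (hw k hk)]
    · refine (abs_sub _ _).trans (le_of_eq ?_)
      rw [abs_of_nonneg (hR u), abs_of_nonneg (mul_nonneg (sum_nonneg fun v _ => hR v) (hπ u))]
  have hsum : ∑ u, ∑ k ∈ s, w k * |ν k u - π u| = ∑ k ∈ s, w k * ∑ u, |ν k u - π u| := by
    rw [sum_comm]; simp_rw [mul_sum]
  have hRπ : ∑ u, (∑ v, R v) * π u = ∑ v, R v := by rw [← mul_sum, hπ1, mul_one]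
  calc tvDist μ π
      ≤ 1 / 2 * ∑ u, (∑ k ∈ s, w k * |ν k u - π u| + (R u + (∑ v, R v) * π u)) := by
        unfold tvDist; gcongr with u; exact hdiff u
    _ = ∑ k ∈ s, w k * tvDist (ν k) π + ∑ u, R u := by
        unfold tvDist
        rw [sum_add_distrib, sum_add_distrib, hsum, hRπ]
        simp_rw [mul_left_comm (w _) (1 / 2 : ℝ)]
        rw [← mul_sum]; ring

lemma tvDist_le_of_eq_sum_add {ι : Type*} {s : Finset ι} {w : ι → ℝ} {ν : ι → Ω → ℝ}
    {μ R : Ω → ℝ} (hμ : ∀ u, μ u = ∑ k ∈ s, w k * ν k u + R u) (hμ1 : ∑ u, μ u = 1)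
    (hν1 : ∀ k ∈ s, ∑ u, ν k u = 1) (hπ : ∀ u, 0 ≤ π u) (hπ1 : ∑ u, π u = 1)
    (hw : ∀ k ∈ s, 0 ≤ w k) (hR : ∀ u, 0 ≤ R u) {δ : ℝ} (hδ : 0 ≤ δ)
    (hνδ : ∀ k ∈ s, tvDist (ν k) π ≤ δ) :
    tvDist μ π ≤ δ + ∑ u, R u := by
  have hmass : ∑ k ∈ s, w k + ∑ u, R u = 1 := by
    rw [← hμ1]
    simp only [hμ, sum_add_distrib]
    rw [sum_comm]
    congr 1
    exact sum_congr rfl fun k hk => by rw [← mul_sum, hν1 k hk, mul_one]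
  have hw1 : ∑ k ∈ s, w k ≤ 1 := by linarith [sum_nonneg fun u (_ : u ∈ univ) => hR u]
  calc tvDist μ π ≤ ∑ k ∈ s, w k * tvDist (ν k) π + ∑ u, R u :=
        tvDist_le_sum_mul_tvDist_add hμ hmass hπ hπ1 hw hR
    _ ≤ ∑ k ∈ s, w k * δ + ∑ u, R u := by
        gcongr with k hk
        · exact hw k hk
        · exact hνδ k hk
    _ ≤ δ + ∑ u, R u := by
        rw [← sum_mul]
        nlinarith

lemma sum_mul_abs_le_sqrt (hπ : ∀ u, 0 ≤ π u) (hπ1 : ∑ u, π u = 1) (k : Ω → ℝ) :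
    ∑ u, π u * |k u| ≤ √(∑ u, π u * k u ^ 2) := by
  refine Real.le_sqrt_of_sq_le ?_
  have := sum_sq_le_sum_mul_sum_of_sq_le_mul univ (r := fun u => π u * |k u|)
    (f := π) (g := fun u => π u * k u ^ 2) (fun u _ => hπ u)
    (fun u _ => mul_nonneg (hπ u) (sq_nonneg _))
    (fun u _ => le_of_eq (by rw [mul_pow, sq_abs]; ring))
  rwa [hπ1, one_mul] at this

end TotalVariation

section Symmetrization

variable {Ω : Type*} {P : Matrix Ω Ω ℝ} {π : Ω → ℝ}

noncomputable def symmetrization (P : Matrix Ω Ω ℝ) (π : Ω → ℝ) : Matrix Ω Ω ℝ :=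
  of fun u v => √(π u) * P u v / √(π v)

lemma symmetrization_isHermitian (hπ : ∀ u, 0 < π u)
    (hrev : ∀ u v, π u * P u v = π v * P v u) : (symmetrization P π).IsHermitian := by
  refine IsHermitian.ext fun u v => ?_
  have hsq : ∀ w, √(π w) * √(π w) = π w := fun w => Real.mul_self_sqrt (hπ w).le
  simp only [symmetrization, of_apply, star_trivial]
  rw [div_eq_div_iff (Real.sqrt_pos.2 (hπ u)).ne' (Real.sqrt_pos.2 (hπ v)).ne']
  linear_combination (hsq v) * P v u - (hsq u) * P u v + hrev v u

variable [Fintype Ω]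

def centeredEigenvalues (P : Matrix Ω Ω ℝ) (π : Ω → ℝ) : Set ℝ :=
  {r | ∃ f : Ω → ℝ, f ≠ 0 ∧ ∑ v, π v * f v = 0 ∧ P *ᵥ f = r • f}

lemma symmetrization_mulVec (hπ : ∀ u, 0 < π u) (f : Ω → ℝ) :
    symmetrization P π *ᵥ (fun v => √(π v) * f v) = fun u => √(π u) * (P *ᵥ f) u := by
  ext u
  simp only [mulVec, dotProduct, symmetrization, of_apply, mul_sum]
  refine sum_congr rfl fun v _ => ?_
  field_simp [(Real.sqrt_pos.2 (hπ v)).ne']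

/-- Projecting out the Perron direction `√π` turns every eigenvalue into either `0` or an
element of `centeredEigenvalues P π`, without any irreducibility assumption. -/
noncomputable def centeredSymmetrization (P : Matrix Ω Ω ℝ) (π : Ω → ℝ) : Matrix Ω Ω ℝ :=
  symmetrization P π - vecMulVec (fun u => √(π u)) (fun u => √(π u))

lemma centeredSymmetrization_isHermitian (hπ : ∀ u, 0 < π u)
    (hrev : ∀ u v, π u * P u v = π v * P v u) : (centeredSymmetrization P π).IsHermitian :=
  (symmetrization_isHermitian hπ hrev).sub (posSemidef_vecMulVec_self_star _).isHermitian

lemma centeredSymmetrization_mulVec (g : Ω → ℝ) :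
    centeredSymmetrization P π *ᵥ g =
      symmetrization P π *ᵥ g - (∑ u, √(π u) * g u) • fun u => √(π u) := by
  rw [centeredSymmetrization, sub_mulVec]
  congr 1
  ext u
  simp only [mulVec, dotProduct, vecMulVec_apply, Pi.smul_apply, smul_eq_mul, sum_mul]
  exact sum_congr rfl fun v _ => by ring

lemma centeredSymmetrization_mulVec_sqrt (hπ : ∀ u, 0 < π u) (hπ1 : ∑ u, π u = 1)
    (hP1 : P *ᵥ 1 = 1) : centeredSymmetrization P π *ᵥ (fun u => √(π u)) = 0 := by
  have h := symmetrization_mulVec (P := P) hπ 1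
  simp only [hP1, Pi.one_apply, mul_one] at h
  simp [centeredSymmetrization_mulVec, h, ← sq, Real.sq_sqrt (hπ _).le, hπ1]

lemma mem_centeredEigenvalues_of_symmetrization_mulVec (hπ : ∀ u, 0 < π u) {μ : ℝ}
    {w : Ω → ℝ} (hw0 : w ≠ 0) (horth : ∑ u, √(π u) * w u = 0)
    (hw : symmetrization P π *ᵥ w = μ • w) : μ ∈ centeredEigenvalues P π := by
  have hs : ∀ u, √(π u) ≠ 0 := fun u => (Real.sqrt_pos.2 (hπ u)).ne'
  have hsw : w = fun u => √(π u) * (w u / √(π u)) := by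
    ext u; field_simp [hs u]
  refine ⟨fun u => w u / √(π u), fun h => hw0 ?_, ?_, ?_⟩
  · ext u
    simpa [hs u] using congrFun h u
  · rw [← horth]
    refine sum_congr rfl fun u _ => ?_
    rw [mul_div_left_comm, Real.div_sqrt, mul_comm]
  · rw [hsw, symmetrization_mulVec hπ] at hw
    ext u
    have hu := congrFun hw u
    simp only [Pi.smul_apply, smul_eq_mul] at hu ⊢
    exact mul_left_cancel₀ (hs u) (by linear_combination hu)

lemma abs_le_of_hasEigenvalue_centeredSymmetrization [DecidableEq Ω] (hπ : ∀ u, 0 < π u)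
    (hπ1 : ∑ u, π u = 1) (hrev : ∀ u v, π u * P u v = π v * P v u) (hP1 : P *ᵥ 1 = 1)
    {c : ℝ} (hc0 : 0 ≤ c) (hc : ∀ r ∈ centeredEigenvalues P π, |r| ≤ c) {μ : ℝ}
    (hμ : Module.End.HasEigenvalue (toEuclideanLin (centeredSymmetrization P π)) μ) :
    |μ| ≤ c := by
  rcases eq_or_ne μ 0 with rfl | hμ0
  · simpa using hc0
  obtain ⟨v, hv, hv0⟩ := hμ.exists_hasEigenvector
  set w : Ω → ℝ := v.ofLp
  have hw : centeredSymmetrization P π *ᵥ w = μ • w :=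
    congrArg WithLp.ofLp (Module.End.mem_eigenspace_iff.1 hv)
  have horth : ∑ u, √(π u) * w u = 0 := by
    have hA := (centeredSymmetrization_isHermitian hπ hrev).eq
    rw [conjTranspose_eq_transpose_of_trivial] at hA
    have := dotProduct_mulVec (fun u => √(π u)) (centeredSymmetrization P π) w
    rw [← mulVec_transpose, hA, centeredSymmetrization_mulVec_sqrt hπ hπ1 hP1, hw,
      dotProduct_smul, zero_dotProduct, smul_eq_mul] at this
    exact (mul_eq_zero.1 this).resolve_left hμ0
  rw [centeredSymmetrization_mulVec, horth, zero_smul, sub_zero] at hw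
  exact hc μ (mem_centeredEigenvalues_of_symmetrization_mulVec hπ
    (fun h => hv0 (by ext u; exact congrFun h u)) horth hw)

lemma sum_sq_symmetrization_mulVec_le (hπ : ∀ u, 0 < π u)
    (hπ1 : ∑ u, π u = 1) (hrev : ∀ u v, π u * P u v = π v * P v u) (hP1 : P *ᵥ 1 = 1)
    {c : ℝ} (hc0 : 0 ≤ c) (hc : ∀ r ∈ centeredEigenvalues P π, |r| ≤ c) (g : Ω → ℝ)
    (hg : ∑ u, √(π u) * g u = 0) :
    ∑ u, (symmetrization P π *ᵥ g) u ^ 2 ≤ c ^ 2 * ∑ u, g u ^ 2 := by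
  classical
  have := (isSymmetric_toEuclideanLin_iff.2 (centeredSymmetrization_isHermitian hπ hrev)
    ).norm_apply_sq_le (fun μ hμ => abs_le_of_hasEigenvalue_centeredSymmetrization hπ hπ1 hrev
      hP1 hc0 hc hμ) (WithLp.toLp 2 g)
  rw [toLpLin_toLp, EuclideanSpace.norm_sq_eq, EuclideanSpace.norm_sq_eq] at this
  simpa [centeredSymmetrization_mulVec, hg, Real.norm_eq_abs, sq_abs] using this

end Symmetrization

section Reversible

variable {Ω : Type*} [Fintype Ω] {P : Matrix Ω Ω ℝ} {π : Ω → ℝ}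

lemma sum_mul_sq_mulVec_le (hπ : ∀ u, 0 < π u)
    (hπ1 : ∑ u, π u = 1) (hrev : ∀ u v, π u * P u v = π v * P v u) (hP1 : P *ᵥ 1 = 1)
    {c : ℝ} (hc0 : 0 ≤ c) (hc : ∀ r ∈ centeredEigenvalues P π, |r| ≤ c) (f : Ω → ℝ)
    (hf : ∑ u, π u * f u = 0) :
    ∑ u, π u * (P *ᵥ f) u ^ 2 ≤ c ^ 2 * ∑ u, π u * f u ^ 2 := by
  have hsq : ∀ u, √(π u) ^ 2 = π u := fun u => Real.sq_sqrt (hπ u).le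
  have h := sum_sq_symmetrization_mulVec_le hπ hπ1 hrev hP1 hc0 hc
    (fun u => √(π u) * f u) (by simpa only [← mul_assoc, ← sq, hsq] using hf)
  simpa only [symmetrization_mulVec hπ, mul_pow, hsq] using h

lemma vecMul_mul_eq_mul_mulVec (hrev : ∀ u v, π u * P u v = π v * P v u) (h : Ω → ℝ) :
    (fun u => π u * h u) ᵥ* P = fun u => π u * (P *ᵥ h) u := by
  ext u
  simp only [vecMul, mulVec, dotProduct, mul_sum]
  exact sum_congr rfl fun v _ => by linear_combination (h v) * hrev v u

variable [DecidableEq Ω]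

lemma vecMul_pow_mul_eq_mul_pow_mulVec (hrev : ∀ u v, π u * P u v = π v * P v u) (m : ℕ)
    (h : Ω → ℝ) : (fun u => π u * h u) ᵥ* P ^ m = fun u => π u * (P ^ m *ᵥ h) u := by
  induction m generalizing h with
  | zero => simp
  | succ m ih =>
    rw [pow_succ', ← vecMul_vecMul, vecMul_mul_eq_mul_mulVec hrev, ih, mulVec_mulVec,
      ← pow_succ, pow_succ']

lemma sum_mul_pow_mulVec (hrev : ∀ u v, π u * P u v = π v * P v u) (hP1 : P *ᵥ 1 = 1)
    (m : ℕ) (f : Ω → ℝ) : ∑ u, π u * (P ^ m *ᵥ f) u = ∑ u, π u * f u := by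
  have hπ := vecMul_pow_mul_eq_mul_pow_mulVec hrev m 1
  simp only [pow_mulVec_eq_self hP1 m, Pi.one_apply, mul_one] at hπ
  have := dotProduct_mulVec π (P ^ m) f
  rwa [hπ] at this

lemma sum_mul_sq_pow_mulVec_le (hπ : ∀ u, 0 < π u)
    (hπ1 : ∑ u, π u = 1) (hrev : ∀ u v, π u * P u v = π v * P v u) (hP1 : P *ᵥ 1 = 1)
    {c : ℝ} (hc0 : 0 ≤ c) (hc : ∀ r ∈ centeredEigenvalues P π, |r| ≤ c) (f : Ω → ℝ)
    (hf : ∑ u, π u * f u = 0) (m : ℕ) :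
    ∑ u, π u * (P ^ m *ᵥ f) u ^ 2 ≤ c ^ (2 * m) * ∑ u, π u * f u ^ 2 := by
  induction m with
  | zero => simp
  | succ m ih =>
    rw [pow_succ', ← mulVec_mulVec, mul_add, mul_one, pow_add, mul_comm (c ^ (2 * m)),
      mul_assoc]
    refine (sum_mul_sq_mulVec_le hπ hπ1 hrev hP1 hc0 hc _ ?_).trans ?_
    · rw [sum_mul_pow_mulVec hrev hP1, hf]
    · exact mul_le_mul_of_nonneg_left ih (sq_nonneg c)

lemma tvDist_vecMul_pow_le (hπ : ∀ u, 0 < π u)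
    (hπ1 : ∑ u, π u = 1) (hrev : ∀ u v, π u * P u v = π v * P v u) (hP1 : P *ᵥ 1 = 1)
    {c : ℝ} (hc0 : 0 ≤ c) (hc : ∀ r ∈ centeredEigenvalues P π, |r| ≤ c) (g : Ω → ℝ)
    (hg : ∑ u, π u * g u = 1) (m : ℕ) :
    tvDist ((fun u => π u * g u) ᵥ* P ^ m) π ≤ c ^ m * √(∑ u, π u * (g u - 1) ^ 2) / 2 := by
  have hdiff : ∀ u, ((fun u => π u * g u) ᵥ* P ^ m) u - π u =
      π u * (P ^ m *ᵥ (g - 1)) u := by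
    intro u
    rw [vecMul_pow_mul_eq_mul_pow_mulVec hrev, mulVec_sub, pow_mulVec_eq_self hP1 m]
    simp [mul_sub]
  have hcen : ∑ u, π u * (g - 1) u = 0 := by
    simp [mul_sub, sum_sub_distrib, hg, hπ1]
  calc tvDist ((fun u => π u * g u) ᵥ* P ^ m) π
      = (∑ u, π u * |(P ^ m *ᵥ (g - 1)) u|) / 2 := by
        simp only [tvDist, hdiff, abs_mul, abs_of_pos (hπ _)]; ring
    _ ≤ √(∑ u, π u * (P ^ m *ᵥ (g - 1)) u ^ 2) / 2 := by
        gcongr; exact sum_mul_abs_le_sqrt (fun u => (hπ u).le) hπ1 _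
    _ ≤ √((c ^ m) ^ 2 * ∑ u, π u * (g u - 1) ^ 2) / 2 := by
        rw [← pow_mul, mul_comm m]
        gcongr
        exact sum_mul_sq_pow_mulVec_le hπ hπ1 hrev hP1 hc0 hc _ hcen m
    _ = c ^ m * √(∑ u, π u * (g u - 1) ^ 2) / 2 := by
        rw [Real.sqrt_mul (by positivity), Real.sqrt_sq (by positivity)]

end Reversible

section SpectralGap

variable {Ω : Type*} [Fintype Ω] [DecidableEq Ω] {P : Matrix Ω Ω ℝ} {π : Ω → ℝ}

lemma mem_Icc_of_mulVec_eq_smul (hP : P ∈ rowStochastic ℝ Ω) (hlazy : ∀ x, 1 / 2 ≤ P x x)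
    {r : ℝ} {f : Ω → ℝ} (hf : f ≠ 0) (hr : P *ᵥ f = r • f) : r ∈ Set.Icc 0 1 := by
  have hμ : Module.End.HasEigenvalue (toLin' P) r :=
    Module.End.hasEigenvalue_of_hasEigenvector ⟨Module.End.mem_eigenspace_iff.2 hr, hf⟩
  obtain ⟨k, hk⟩ := eigenvalue_mem_ball hμ
  have hrow : ∑ j ∈ univ.erase k, ‖P k j‖ = 1 - P k k := by
    rw [← sum_row_of_mem_rowStochastic hP k, ← sum_erase_add _ _ (mem_univ k),
      add_sub_cancel_right]
    exact sum_congr rfl fun j _ => Real.norm_of_nonneg (nonneg_of_mem_rowStochastic hP)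
  rw [Metric.mem_closedBall, Real.dist_eq, hrow, abs_le] at hk
  have := hlazy k
  constructor <;> linarith [hk.1, hk.2]

lemma eq_of_mulVec_eq_self (hP : P ∈ rowStochastic ℝ Ω) (hirr : ∀ x y, ∃ t : ℕ, 0 < (P ^ t) x y)
    {f : Ω → ℝ} (hf : P *ᵥ f = f) (x y : Ω) : f x = f y := by
  suffices hmax : ∀ v, (∀ u, f u ≤ f v) → ∀ y, f y = f v by
    have : Nonempty Ω := ⟨x⟩
    obtain ⟨v, hv⟩ := Finite.exists_max f
    rw [hmax v hv x, hmax v hv y]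
  intro v hv y
  obtain ⟨t, ht⟩ := hirr v y
  have hfv : ∑ u, (P ^ t) v u * f u = f v := congrFun (pow_mulVec_eq_self hf t) v
  have hzero : ∑ u, (P ^ t) v u * (f v - f u) = 0 := by
    simp only [mul_sub, sum_sub_distrib, ← sum_mul, sum_row_of_mem_rowStochastic (pow_mem hP t),
      one_mul, hfv, sub_self]
  have := (sum_eq_zero_iff_of_nonneg fun u _ =>
    mul_nonneg (nonneg_of_mem_rowStochastic (pow_mem hP t)) (sub_nonneg.2 (hv u))).1 hzero y
      (mem_univ y)
  linarith [(mul_eq_zero.1 this).resolve_left ht.ne']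

lemma centeredEigenvalues_subset_Icc (hP : P ∈ rowStochastic ℝ Ω)
    (hlazy : ∀ x, 1 / 2 ≤ P x x) : centeredEigenvalues P π ⊆ Set.Icc 0 1 := by
  rintro r ⟨f, hf, -, hr⟩
  exact mem_Icc_of_mulVec_eq_smul hP hlazy hf hr

lemma one_notMem_centeredEigenvalues (hP : P ∈ rowStochastic ℝ Ω) (hπ1 : ∑ u, π u = 1)
    (hirr : ∀ x y, ∃ t : ℕ, 0 < (P ^ t) x y) : 1 ∉ centeredEigenvalues P π := by
  rintro ⟨f, hf, hcen, hfix⟩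
  rw [one_smul] at hfix
  obtain ⟨x⟩ : Nonempty Ω := by
    by_contra h
    exact hf (funext fun v => (h ⟨v⟩).elim)
  have hconst : f = fun _ => f x := funext fun y => eq_of_mulVec_eq_self hP hirr hfix y x
  rw [hconst, ← sum_mul, hπ1, one_mul] at hcen
  exact hf (hconst.trans (by rw [hcen]; rfl))

lemma mem_Ico_of_isGreatest_centeredEigenvalues (hP : P ∈ rowStochastic ℝ Ω)
    (hπ1 : ∑ u, π u = 1) (hirr : ∀ x y, ∃ t : ℕ, 0 < (P ^ t) x y)
    (hlazy : ∀ x, 1 / 2 ≤ P x x) {l : ℝ} (hl : IsGreatest (centeredEigenvalues P π) l) :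
    l ∈ Set.Ico 0 1 := by
  obtain ⟨hl0, hl1⟩ := centeredEigenvalues_subset_Icc hP hlazy hl.1
  refine ⟨hl0, hl1.lt_of_ne ?_⟩
  rintro rfl
  exact one_notMem_centeredEigenvalues hP hπ1 hirr hl.1

end SpectralGap

section Hitting

variable {Ω : Type*} [DecidableEq Ω]

def diagIndicator (s : Finset Ω) : Matrix Ω Ω ℝ := diagonal fun z => if z ∈ s then 1 else 0

lemma diagIndicator_apply_nonneg (s : Finset Ω) (i j : Ω) : 0 ≤ diagIndicator s i j := by
  unfold diagIndicator; rw [diagonal_apply]; positivity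

variable [Fintype Ω] {P : Matrix Ω Ω ℝ} {π : Ω → ℝ} {Z : Finset Ω} {x : Ω}

lemma diagIndicator_add_compl (s : Finset Ω) : diagIndicator s + diagIndicator sᶜ = 1 := by
  ext i j
  by_cases h : i ∈ s <;> simp [diagIndicator, h, one_apply, diagonal_apply]

def killed (P : Matrix Ω Ω ℝ) (Z : Finset Ω) : Matrix Ω Ω ℝ := diagIndicator Zᶜ * P

lemma killed_apply_nonneg (hP0 : ∀ x y, 0 ≤ P x y) (x y : Ω) : 0 ≤ killed P Z x y :=
  mul_apply_nonneg (diagIndicator_apply_nonneg _) hP0 x y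

lemma killed_mul_apply (M : Matrix Ω Ω ℝ) (x z : Ω) :
    (killed P Z * M) x z = if x ∈ Z then 0 else ∑ y, P x y * M y z := by
  rw [killed, Matrix.mul_assoc, diagIndicator, diagonal_mul, mul_apply]
  by_cases hx : x ∈ Z <;> simp [hx]

lemma fstHit_eq_killed_pow_mul_apply (t : ℕ) (x z : Ω) :
    fstHit P Z t x z = (killed P Z ^ t * diagIndicator Z) x z := by
  induction t generalizing x with
  | zero => by_cases hx : x ∈ Z <;> by_cases hxz : x = z <;> simp [fstHit, diagIndicator, hx, hxz]
  | succ t ih =>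
    rw [pow_succ', Matrix.mul_assoc, killed_mul_apply]
    simp only [fstHit, ih]

lemma sum_killed_pow_mul_pow_apply_eq_survSet (hP : P ∈ rowStochastic ℝ Ω) (t r : ℕ) (x : Ω) :
    ∑ u, (killed P Z ^ t * diagIndicator Zᶜ * P ^ r) x u = survSet P Z t x := by
  have hrow := sum_row_of_mem_rowStochastic (pow_mem hP r)
  induction t generalizing x with
  | zero => by_cases hx : x ∈ Z <;> simp [survSet, hx, diagIndicator, hrow]
  | succ t ih =>
    have hstep : ∀ u, (killed P Z ^ (t + 1) * diagIndicator Zᶜ * P ^ r) x u =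
        if x ∈ Z then 0 else ∑ y, P x y * (killed P Z ^ t * diagIndicator Zᶜ * P ^ r) y u :=
      fun u => by
        rw [pow_succ', Matrix.mul_assoc, Matrix.mul_assoc, killed_mul_apply, ← Matrix.mul_assoc]
    simp_rw [hstep]
    by_cases hx : x ∈ Z
    · simp [survSet, hx]
    · simp only [hx, if_false, survSet]
      rw [sum_comm]
      simp_rw [← mul_sum, ih]

lemma pow_add_apply_eq_sum_fstHit (t r : ℕ) (x u : Ω) :
    (P ^ (t + r)) x u = ∑ ij ∈ antidiagonal t, ∑ z, fstHit P Z ij.1 x z * (P ^ (ij.2 + r)) z u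
      + (killed P Z ^ t * diagIndicator Zᶜ * P ^ r) x u := by
  rw [pow_add, pow_eq_sum_antidiagonal_add P _ _ (diagIndicator_add_compl Z) t, add_mul,
    sum_mul, Matrix.add_apply, Matrix.sum_apply]
  congr 1
  refine sum_congr rfl fun ij _ => ?_
  simp only [Matrix.mul_assoc, ← pow_add]
  rw [← Matrix.mul_assoc, mul_apply]
  simp only [fstHit_eq_killed_pow_mul_apply]
  rfl

lemma survSet_of_mem {x : Ω} (hx : x ∈ Z) (t : ℕ) : survSet P Z t x = 0 := by
  cases t <;> simp [survSet, hx]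

lemma survSet_nonneg (hP0 : ∀ x y, 0 ≤ P x y) (t : ℕ) (x : Ω) : 0 ≤ survSet P Z t x := by
  induction t generalizing x with
  | zero => unfold survSet; positivity
  | succ t ih =>
    unfold survSet
    split_ifs
    exacts [le_rfl, sum_nonneg fun y _ => mul_nonneg (hP0 x y) (ih y)]

lemma survSet_add_pow_apply_le_one (hP : P ∈ rowStochastic ℝ Ω) {z : Ω} (hz : z ∈ Z)
    (t : ℕ) (y : Ω) : survSet P Z t y + (P ^ t) y z ≤ 1 := by
  induction t generalizing y with
  | zero =>
    by_cases hy : y ∈ Z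
    · simpa [survSet, hy, one_apply] using ite_le_one le_rfl zero_le_one
    · simp [survSet, hy, one_apply, show y ≠ z from fun h => hy (h ▸ hz)]
  | succ t ih =>
    by_cases hy : y ∈ Z
    · simpa [survSet, hy] using le_one_of_mem_rowStochastic (pow_mem hP (t + 1))
    · calc survSet P Z (t + 1) y + (P ^ (t + 1)) y z
          = ∑ w, P y w * (survSet P Z t w + (P ^ t) w z) := by
            simp [survSet, hy, pow_succ', mul_apply, mul_add, sum_add_distrib]
        _ ≤ ∑ w, P y w * 1 := by
            gcongr with w
            · exact nonneg_of_mem_rowStochastic hP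
            · exact ih w
        _ = 1 := by simpa using sum_row_of_mem_rowStochastic hP y

lemma survSet_add_le_mul (hP0 : ∀ x y, 0 ≤ P x y) {t : ℕ} {θ : ℝ}
    (hθ : ∀ y, survSet P Z t y ≤ θ) (n : ℕ) (x : Ω) :
    survSet P Z (n + t) x ≤ θ * survSet P Z n x := by
  induction n generalizing x with
  | zero =>
    by_cases hx : x ∈ Z
    · simp [survSet_of_mem hx]
    · simpa [survSet, hx] using hθ x
  | succ n ih =>
    rw [Nat.add_right_comm]
    by_cases hx : x ∈ Z
    · simp [survSet_of_mem hx]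
    · simp only [survSet, hx, if_false, mul_sum]
      exact sum_le_sum fun y _ => by
        rw [mul_left_comm]; exact mul_le_mul_of_nonneg_left (ih y) (hP0 x y)

lemma survSet_succ_le (hP : P ∈ rowStochastic ℝ Ω) (hZ : Z.Nonempty) (t : ℕ) (x : Ω) :
    survSet P Z (t + 1) x ≤ survSet P Z t x := by
  obtain ⟨z, hz⟩ := hZ
  have h1 : ∀ y, survSet P Z 1 y ≤ 1 := fun y =>
    (le_add_of_nonneg_right (nonneg_of_mem_rowStochastic (pow_mem hP 1))).trans
      (survSet_add_pow_apply_le_one hP hz 1 y)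
  simpa using survSet_add_le_mul (fun _ _ => nonneg_of_mem_rowStochastic hP) h1 t x

lemma exists_survSet_le (hP : P ∈ rowStochastic ℝ Ω) (hirr : ∀ x y, ∃ t : ℕ, 0 < (P ^ t) x y)
    (hZ : Z.Nonempty) (x : Ω) {p : ℝ} (hp : 0 < p) : ∃ s, survSet P Z s x ≤ p := by
  have hP0 : ∀ x y, 0 ≤ P x y := fun _ _ => nonneg_of_mem_rowStochastic hP
  obtain ⟨z, hz⟩ := hZ
  choose τ hτ using fun y => hirr y z
  set t := univ.sup τ
  have hlt : ∀ y, survSet P Z t y < 1 := fun y =>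
    calc survSet P Z t y ≤ survSet P Z (τ y) y :=
          antitone_nat_of_succ_le (f := fun n => survSet P Z n y)
            (fun n => survSet_succ_le hP ⟨z, hz⟩ n y) (le_sup (f := τ) (mem_univ y))
      _ < 1 := by linarith [survSet_add_pow_apply_le_one hP hz (τ y) y, hτ y]
  have : Nonempty Ω := ⟨z⟩
  obtain ⟨y₀, hy₀⟩ := Finite.exists_max (survSet P Z t)
  set θ := survSet P Z t y₀
  have hpow : ∀ k, survSet P Z (k * t) x ≤ θ ^ k := by
    intro k
    induction k with
    | zero => simp only [zero_mul, pow_zero, survSet]; split_ifs <;> norm_num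
    | succ k ih =>
      rw [Nat.succ_mul, pow_succ']
      exact (survSet_add_le_mul hP0 hy₀ _ x).trans
        (mul_le_mul_of_nonneg_left ih (survSet_nonneg hP0 t y₀))
  obtain ⟨k, hk⟩ := exists_pow_lt_of_lt_one hp (hlt y₀)
  exact ⟨k * t, (hpow k).trans hk.le⟩

lemma fstHit_nonneg (hP0 : ∀ x y, 0 ≤ P x y) (t : ℕ) (x z : Ω) : 0 ≤ fstHit P Z t x z := by
  induction t generalizing x with
  | zero => unfold fstHit; positivity
  | succ t ih =>
    unfold fstHit
    split_ifs
    exacts [le_rfl, sum_nonneg fun y _ => mul_nonneg (hP0 x y) (ih y)]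

lemma fstHit_of_notMem {z : Ω} (hz : z ∉ Z) (t : ℕ) (x : Ω) : fstHit P Z t x z = 0 := by
  induction t generalizing x with
  | zero => exact if_neg fun (h : x ∈ Z ∧ x = z) => hz (h.2 ▸ h.1)
  | succ t ih => simp [fstHit, ih]

/-- The density of `π_Z` (`π` conditioned on `Z`) with respect to `π`. -/
noncomputable def condDensity (π : Ω → ℝ) (Z : Finset Ω) (u : Ω) : ℝ :=
  if u ∈ Z then (∑ w ∈ Z, π w)⁻¹ else 0

lemma sum_mul_condDensity (hZ : ∑ w ∈ Z, π w ≠ 0) : ∑ u, π u * condDensity π Z u = 1 := by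
  simp [condDensity, mul_ite, ← sum_mul, hZ]

lemma sum_mul_condDensity_sub_one_sq (hπ1 : ∑ u, π u = 1) (hZ : ∑ w ∈ Z, π w ≠ 0) :
    ∑ u, π u * (condDensity π Z u - 1) ^ 2 = (∑ u ∈ Zᶜ, π u) / ∑ u ∈ Z, π u := by
  have hsplit : ∑ u ∈ Z, π u + ∑ u ∈ Zᶜ, π u = 1 := (sum_add_sum_compl Z π).trans hπ1
  have hin : ∑ u ∈ Z, π u * (condDensity π Z u - 1) ^ 2 =
      (∑ u ∈ Z, π u) * ((∑ w ∈ Z, π w)⁻¹ - 1) ^ 2 := by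
    rw [sum_mul]; exact sum_congr rfl fun u hu => by simp [condDensity, hu]
  have hout : ∑ u ∈ Zᶜ, π u * (condDensity π Z u - 1) ^ 2 = ∑ u ∈ Zᶜ, π u :=
    sum_congr rfl fun u hu => by simp [condDensity, mem_compl.1 hu]
  rw [← sum_add_sum_compl Z, hin, hout]
  field_simp
  linear_combination (∑ u ∈ Z, π u - 1) * hsplit

lemma tvDist_condDensity_vecMul_pow_le (hπ : ∀ u, 0 < π u) (hπ1 : ∑ u, π u = 1)
    (hrev : ∀ u v, π u * P u v = π v * P v u) (hP1 : P *ᵥ 1 = 1) {l : ℝ} (hl0 : 0 ≤ l)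
    (hl1 : l < 1) (hl : ∀ r ∈ centeredEigenvalues P π, |r| ≤ l) (hZ : Z.Nonempty) {ε : ℝ}
    (hε : 0 < ε) {m : ℕ}
    (hm : ⌈(1 - l)⁻¹ * Real.log ((∑ u ∈ Zᶜ, π u) / ((∑ u ∈ Z, π u) * ε ^ 2)) / 2⌉₊ ≤ m) :
    tvDist ((fun v => π v * condDensity π Z v) ᵥ* P ^ m) π ≤ ε / 2 := by
  have hπZ : ∑ w ∈ Z, π w ≠ 0 := (sum_pos (fun w _ => hπ w) hZ).ne'
  refine (tvDist_vecMul_pow_le hπ hπ1 hrev hP1 hl0 hl _ (sum_mul_condDensity hπZ) m).trans ?_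
  rw [sum_mul_condDensity_sub_one_sq hπ1 hπZ]
  have := pow_mul_sqrt_le_of_ceil_le (m := m) hl0 hl1
    (div_nonneg (sum_nonneg fun u _ => (hπ u).le) (sum_nonneg fun u _ => (hπ u).le)) hε
    (by rwa [div_div])
  linarith

lemma fstHit_eq_mul_condDensity (hZ : ∑ w ∈ Z, π w ≠ 0)
    (hbal : ∀ (t : ℕ) (z : Ω), z ∈ Z →
      fstHit P Z t x z * (∑ w ∈ Z, π w) = π z * (∑ w ∈ Z, fstHit P Z t x w))
    (t : ℕ) (z : Ω) :
    fstHit P Z t x z = (∑ w ∈ Z, fstHit P Z t x w) * (π z * condDensity π Z z) := by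
  by_cases hz : z ∈ Z
  · rw [condDensity, if_pos hz]
    field_simp
    linear_combination hbal t z hz
  · rw [fstHit_of_notMem hz, condDensity, if_neg hz, mul_zero, mul_zero]

lemma pow_add_apply_eq_of_balanced (hZ : ∑ w ∈ Z, π w ≠ 0)
    (hbal : ∀ (t : ℕ) (z : Ω), z ∈ Z →
      fstHit P Z t x z * (∑ w ∈ Z, π w) = π z * (∑ w ∈ Z, fstHit P Z t x w))
    (t r : ℕ) (u : Ω) :
    (P ^ (t + r)) x u = ∑ ij ∈ antidiagonal t, (∑ w ∈ Z, fstHit P Z ij.1 x w) *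
        ((fun v => π v * condDensity π Z v) ᵥ* P ^ (ij.2 + r)) u
      + (killed P Z ^ t * diagIndicator Zᶜ * P ^ r) x u := by
  rw [pow_add_apply_eq_sum_fstHit]
  congr 1
  refine sum_congr rfl fun ij _ => ?_
  simp only [vecMul, dotProduct, mul_sum]
  refine sum_congr rfl fun z _ => ?_
  rw [fstHit_eq_mul_condDensity hZ hbal]
  ring

end Hitting

theorem stmt19_general {Ω : Type*} [Fintype Ω] [DecidableEq Ω]
    (P : Matrix Ω Ω ℝ) (π : Ω → ℝ)
    (hP0 : ∀ x y, 0 ≤ P x y) (hP1 : ∀ x, ∑ y, P x y = 1)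
    (hπ0 : ∀ x, 0 < π x) (hπ1 : ∑ x, π x = 1)
    (hrev : ∀ x y, π x * P x y = π y * P y x)
    (hirr : ∀ x y, ∃ t : ℕ, 0 < (P ^ t) x y)
    (hlazy : ∀ x, (1 : ℝ) / 2 ≤ P x x)
    (lam2 : ℝ)
    (hlam2 : IsGreatest {r : ℝ | ∃ f : Ω → ℝ, f ≠ 0 ∧ (∑ v, π v * f v) = 0 ∧
      P.mulVec f = r • f} lam2)
    (Z : Finset Ω) (hZ : Z.Nonempty) (x : Ω)
    (hbal : ∀ (t : ℕ) (z : Ω), z ∈ Z →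
      fstHit P Z t x z * (∑ w ∈ Z, π w) = π z * (∑ w ∈ Z, fstHit P Z t x w))
    (p ε : ℝ) (hp0 : 0 < p) (hε0 : 0 < ε) :
    (1 / 2) * ∑ u, |(P ^ (sInf {s : ℕ | survSet P Z s x ≤ p} +
        ⌈(1 - lam2)⁻¹ *
          Real.log ((∑ u ∈ Zᶜ, π u) / ((∑ u ∈ Z, π u) * ε ^ 2)) / 2⌉₊)) x u - π u|
      ≤ p + ε := by
  have hP : P ∈ rowStochastic ℝ Ω := mem_rowStochastic_iff_sum.2 ⟨hP0, hP1⟩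
  have hπZ : ∑ w ∈ Z, π w ≠ 0 := (sum_pos (fun w _ => hπ0 w) hZ).ne'
  obtain ⟨hlam0, hlam1⟩ := mem_Ico_of_isGreatest_centeredEigenvalues hP hπ1 hirr hlazy hlam2
  have hgap : ∀ r ∈ centeredEigenvalues P π, |r| ≤ lam2 := fun r hr =>
    abs_le.2 ⟨by linarith [(centeredEigenvalues_subset_Icc hP hlazy hr).1], hlam2.2 hr⟩
  set T := sInf {s : ℕ | survSet P Z s x ≤ p}
  set r := ⌈(1 - lam2)⁻¹ * Real.log ((∑ u ∈ Zᶜ, π u) / ((∑ u ∈ Z, π u) * ε ^ 2)) / 2⌉₊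
  have hT : survSet P Z T x ≤ p := Nat.sInf_mem (exists_survSet_le hP hirr hZ x hp0)
  have hν1 : ∀ ij ∈ antidiagonal T,
      ∑ u, ((fun v => π v * condDensity π Z v) ᵥ* P ^ (ij.2 + r)) u = 1 := fun ij _ => by
    simpa [dotProduct] using vecMul_dotProduct_one_eq_one_rowStochastic (pow_mem hP _)
      (by simpa [dotProduct] using sum_mul_condDensity hπZ)
  have hR : ∀ u, 0 ≤ (killed P Z ^ T * diagIndicator Zᶜ * P ^ r) x u :=
    mul_apply_nonneg (mul_apply_nonneg (pow_apply_nonneg (killed_apply_nonneg hP0) T)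
      (diagIndicator_apply_nonneg _)) (pow_apply_nonneg hP0 r) x
  calc tvDist ((P ^ (T + r)) x) π ≤ ε / 2 + survSet P Z T x := by
        rw [← sum_killed_pow_mul_pow_apply_eq_survSet hP T r x]
        exact tvDist_le_of_eq_sum_add (pow_add_apply_eq_of_balanced hπZ hbal T r)
          (sum_row_of_mem_rowStochastic (pow_mem hP _) x) hν1 (fun u => (hπ0 u).le) hπ1
          (fun ij _ => sum_nonneg fun w _ => fstHit_nonneg hP0 _ _ _) hR (by positivity)
          fun ij _ => tvDist_condDensity_vecMul_pow_le hπ0 hπ1 hrev hP.2 hlam0 hlam1 hgap hZ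
            hε0 (Nat.le_add_left r ij.2)
    _ ≤ p + ε := by linarith

/-- For a finite lazy irreducible reversible Markov chain,
`Z ⊂ Ω` nonempty and balanced seen from `x` (on the event `T_Z = t` the hitting
position is distributed as `π` conditioned on `Z`), `p, ε ∈ (0,1)`: with
`t_{x,Z}(p) = min{t : P_x[T_Z > t] ≤ p}` and
`r_ε = ⌈t_rel·log(π(Zᶜ)/(π(Z)ε²))/2⌉`, one has
`‖P_x^{t_{x,Z}(p)+r_ε} - π‖_TV ≤ p + ε`. -/
theorem stmt19 {Ω : Type*} [Fintype Ω] [Nonempty Ω] [DecidableEq Ω]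
    (P : Matrix Ω Ω ℝ) (π : Ω → ℝ)
    (hP0 : ∀ x y, 0 ≤ P x y) (hP1 : ∀ x, ∑ y, P x y = 1)
    (hπ0 : ∀ x, 0 < π x) (hπ1 : ∑ x, π x = 1)
    (hrev : ∀ x y, π x * P x y = π y * P y x)
    (hirr : ∀ x y, ∃ t : ℕ, 0 < (P ^ t) x y)
    (hlazy : ∀ x, (1 : ℝ) / 2 ≤ P x x)
    (lam2 : ℝ)
    (hlam2 : IsGreatest {r : ℝ | ∃ f : Ω → ℝ, f ≠ 0 ∧ (∑ v, π v * f v) = 0 ∧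
      P.mulVec f = r • f} lam2)
    (Z : Finset Ω) (hZ : Z.Nonempty) (x : Ω)
    (hbal : ∀ (t : ℕ) (z : Ω), z ∈ Z →
      fstHit P Z t x z * (∑ w ∈ Z, π w) = π z * (∑ w ∈ Z, fstHit P Z t x w))
    (p ε : ℝ) (hp0 : 0 < p) (hp1 : p < 1) (hε0 : 0 < ε) (hε1 : ε < 1) :
    (1 / 2) * ∑ u, |(P ^ (sInf {s : ℕ | survSet P Z s x ≤ p} +
        ⌈(1 - lam2)⁻¹ *
          Real.log ((∑ u ∈ Zᶜ, π u) / ((∑ u ∈ Z, π u) * ε ^ 2)) / 2⌉₊)) x u - π u|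
      ≤ p + ε :=
  stmt19_general P π hP0 hP1 hπ0 hπ1 hrev hirr hlazy lam2 hlam2 Z hZ x hbal p ε hp0 hε0
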